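/- Let F be a linear code in F_2^24 with |F| = 2^12 containing a subset C of size 2576 such that the Hamming distance between any two distinct elements of C is at least 8. Then F has minimum distance at least 8, i.e., every nonzero word of F has weight at least 8. -/

import Mathlib

/-!
Since `2 * 2576 > 2 ^ 12`, the sets `C` and `u + C` cannot be disjoint inside `F`, so every
`u ∈ F` is a difference `x - y` of codewords `x, y ∈ C`. For `u ≠ 0` these are distinct, and
`wt u = d(x, y) ≥ 8`.
-/

open Finset
open scoped Pointwise

theorem hammingDist_eq_hammingNorm_sub {ι : Type*} [Fintype ι] {β : ι → Type*}
    [∀ i, AddGroup (β i)] [∀ i, DecidableEq (β i)] (x y : ∀ i, β i) :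
    hammingDist x y = hammingNorm (x - y) := by
  simp_rw [hammingNorm, hammingDist, Pi.sub_apply, ne_eq, sub_eq_zero]

theorem AddSubgroup.mem_sub_self_of_card_lt {G : Type*} [AddGroup G] [DecidableEq G]
    {H : AddSubgroup G} [Finite H] {C : Finset G} (hCH : ↑C ⊆ (H : Set G))
    (hcard : Nat.card H < 2 * #C) {u : G} (hu : u ∈ H) : u ∈ C - C := by
  let S := (H : Set G).toFinite.toFinset
  have hS : Nat.card H = #S := Nat.card_eq_card_finite_toFinset _
  have hCS : C ⊆ S := fun x hx ↦ (Set.Finite.mem_toFinset _).2 (hCH hx)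
  have huCS : u +ᵥ C ⊆ S := by
    intro x hx
    obtain ⟨y, hy, rfl⟩ := mem_vadd_finset.1 hx
    exact (Set.Finite.mem_toFinset _).2 (H.add_mem hu (hCH hy))
  obtain ⟨x, hx⟩ := inter_nonempty_of_card_lt_card_add_card hCS huCS
    (by rw [card_vadd_finset]; omega)
  obtain ⟨hxC, hxu⟩ := mem_inter.1 hx
  obtain ⟨y, hyC, rfl⟩ := mem_vadd_finset.1 hxu
  exact mem_sub.2 ⟨u + y, hxC, y, hyC, add_sub_cancel_right u y⟩

theorem le_hammingNorm_of_mem_sub {ι : Type*} [Fintype ι] {β : ι → Type*}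
    [∀ i, AddGroup (β i)] [∀ i, DecidableEq (β i)] {C : Finset (∀ i, β i)} {d : ℕ}
    (hC : ∀ x ∈ C, ∀ y ∈ C, x ≠ y → d ≤ hammingDist x y) {u : ∀ i, β i} (hu : u ∈ C - C)
    (hu0 : u ≠ 0) : d ≤ hammingNorm u := by
  obtain ⟨x, hx, y, hy, rfl⟩ := mem_sub.1 hu
  rw [← hammingDist_eq_hammingNorm_sub]
  exact hC x hx y hy (sub_ne_zero.1 hu0)

/-- Let `F` be a linear code in `F_2^24` with `|F| = 2^12` containing a subset `C` of
size 2576 with pairwise distances at least 8. Then every nonzero word of `F` has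
weight at least 8. -/
theorem min_weight_of_large_code (F : Submodule (ZMod 2) (Fin 24 → ZMod 2))
    (hF : Nat.card F = 2 ^ 12) (C : Finset (Fin 24 → ZMod 2))
    (hCF : ↑C ⊆ (F : Set (Fin 24 → ZMod 2))) (hcard : C.card = 2576)
    (hdist : ∀ x ∈ C, ∀ y ∈ C, x ≠ y → 8 ≤ hammingDist x y) :
    ∀ u ∈ F, u ≠ 0 → 8 ≤ hammingNorm u := by
  intro u hu hu0
  have hlarge : Nat.card F.toAddSubgroup < 2 * #C := by
    change Nat.card F < _
    rw [hF, hcard]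
    norm_num
  exact le_hammingNorm_of_mem_sub hdist
    (AddSubgroup.mem_sub_self_of_card_lt (H := F.toAddSubgroup) hCF hlarge hu) hu0
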